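/- arXiv:1907.05366 — 3 statements merged into one kernel-verified Lean document; each statement's English description precedes it below -/
import Mathlib

section
/- For any finite simple graph G, the induced matching number of G is at most the co-chordal cover number of G, which in turn is at most the matching number of G: ν(G) ≤ cochord(G) ≤ mat(G). -/
open MvPolynomial

noncomputable section

namespace EdgeIdealReg

open scoped Classical

/-- The edge ideal of a simple graph, in the polynomial ring with variables the vertices. -/
def edgeIdeal (K : Type) [Field K] {V : Type} (G : SimpleGraph V) :
    Ideal (MvPolynomial V K) :=
  Ideal.span { p | ∃ u v : V, G.Adj u v ∧ p = X u * X v }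

/-- The edge ideal of the induced subgraph on a set `s` of vertices, viewed inside the
polynomial ring of the ambient graph (extra variables do not change the regularity). -/
def edgeIdealOn (K : Type) [Field K] {V : Type} (G : SimpleGraph V) (s : Set V) :
    Ideal (MvPolynomial V K) :=
  Ideal.span { p | ∃ u v : V, G.Adj u v ∧ u ∈ s ∧ v ∈ s ∧ p = X u * X v }

/-- The `r`-th symbolic power of an ideal: the intersection over all minimal primes `p` of `I`
of the contraction of `I^r` localized at `p`; concretely,
`f ∈ I^{(r)}` iff for every minimal prime `p` of `I` there is `s ∉ p` with `s * f ∈ I ^ r`. -/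
def symbolicPower {R : Type} [CommRing R] (I : Ideal R) (r : ℕ) : Ideal R where
  carrier := { f | ∀ p ∈ I.minimalPrimes, ∃ s, s ∉ p ∧ s * f ∈ I ^ r }
  zero_mem' := by
    intro p hp
    exact ⟨1, (Ideal.ne_top_iff_one p).mp hp.1.1.ne_top, by simp⟩
  add_mem' := by
    intro a b ha hb p hp
    obtain ⟨s, hs, hsa⟩ := ha p hp
    obtain ⟨t, ht, htb⟩ := hb p hp
    refine ⟨s * t, fun h => ?_, ?_⟩
    · rcases hp.1.1.mem_or_mem h with h' | h'
      · exact hs h'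
      · exact ht h'
    · have : s * t * (a + b) = t * (s * a) + s * (t * b) := by ring
      rw [this]
      exact Ideal.add_mem _ (Ideal.mul_mem_left _ _ hsa) (Ideal.mul_mem_left _ _ htb)
  smul_mem' := by
    intro c f hf p hp
    obtain ⟨s, hs, hsf⟩ := hf p hp
    refine ⟨s, hs, ?_⟩
    have : s * (c • f) = c * (s * f) := by
      simp only [smul_eq_mul]; ring
    rw [this]
    exact Ideal.mul_mem_left _ _ hsf

/-- Symbolic power with an integer exponent, with the convention `I^{(k)} = S` for `k ≤ 0`. -/
def symbolicPowerZ {R : Type} [CommRing R] (I : Ideal R) (k : ℤ) : Ideal R :=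
  if k ≤ 0 then ⊤ else symbolicPower I k.toNat

/-- A graded free resolution of `S/I` over the polynomial ring `S = K[x_v]`:
`⋯ → F_{i+1} → F_i → ⋯ → F_0 = S → S/I → 0`, where `F_i` is a graded free module with
basis elements of degrees `deg i k`, the differentials are given by matrices of homogeneous
polynomials of the appropriate degrees, the image of `F_1 → F_0 = S` is `I`, and the
complex is exact in positive homological degrees. -/
structure GradedFreeResolution {K : Type} [Field K] {σ : Type}
    (I : Ideal (MvPolynomial σ K)) where
  rank : ℕ → ℕ
  deg : (i : ℕ) → Fin (rank i) → ℕ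
  rank_zero : rank 0 = 1
  deg_zero : ∀ k, deg 0 k = 0
  mat : (i : ℕ) → Matrix (Fin (rank i)) (Fin (rank (i + 1))) (MvPolynomial σ K)
  homog : ∀ i k j, mat i k j = 0 ∨
    ∃ e, deg (i + 1) j = deg i k + e ∧ (mat i k j).IsHomogeneous e
  range_zero : ∀ f : MvPolynomial σ K,
    f ∈ I ↔ (fun _ => f) ∈ LinearMap.range (Matrix.mulVecLin (mat 0))
  isExact : ∀ i, LinearMap.ker (Matrix.mulVecLin (mat i)) =
    LinearMap.range (Matrix.mulVecLin (mat (i + 1)))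

/-- The Castelnuovo–Mumford regularity of the quotient `S/I` for a homogeneous ideal `I` of
the polynomial ring: the least `d` such that some graded free resolution of `S/I` has all its
`i`-th syzygies generated in degrees `≤ d + i` (the minimal free resolution realizes the
infimum).  By convention `reg (S/S) = ⊥ = -∞`. -/

def regQuot {K : Type} [Field K] {σ : Type} (I : Ideal (MvPolynomial σ K)) : WithBot ℤ :=
  if I = ⊤ then ⊥
  else ((sInf { d : ℤ | ∃ F : GradedFreeResolution I,
      ∀ i (k : Fin (F.rank i)), (F.deg i k : ℤ) ≤ d + i } : ℤ) : WithBot ℤ)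

/-- A set of edges of `G` that forms a matching: pairwise disjoint edges. -/
def IsMatchingSet {V : Type} (G : SimpleGraph V) (M : Finset (Sym2 V)) : Prop :=
  (M : Set (Sym2 V)) ⊆ G.edgeSet ∧
    (M : Set (Sym2 V)).Pairwise fun e f => ∀ v, v ∈ e → v ∉ f

/-- An induced matching: a matching such that no two of its edges are joined by an edge
of `G`, i.e. it is the edge set of an induced subgraph. -/
def IsInducedMatchingSet {V : Type} (G : SimpleGraph V) (M : Finset (Sym2 V)) : Prop :=
  IsMatchingSet G M ∧
    (M : Set (Sym2 V)).Pairwise fun e f => ∀ u v, u ∈ e → v ∈ f → ¬G.Adj u v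

/-- The matching number `mat(G)`. -/
def matchingNumber {V : Type} (G : SimpleGraph V) : ℕ :=
  sSup { n | ∃ M, IsMatchingSet G M ∧ M.card = n }

/-- The induced matching number `ν(G)`. -/
def inducedMatchingNumber {V : Type} (G : SimpleGraph V) : ℕ :=
  sSup { n | ∃ M, IsInducedMatchingSet G M ∧ M.card = n }

/-- `G` has an induced cycle of length `n`. -/
def HasInducedCycle {V : Type} (G : SimpleGraph V) (n : ℕ) : Prop :=
  ∃ f : ZMod n → V, Function.Injective f ∧
    ∀ i j : ZMod n, G.Adj (f i) (f j) ↔ (j = i + 1 ∨ i = j + 1)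

/-- A graph is chordal if every induced cycle has length `3`. -/
def Chordal {V : Type} (G : SimpleGraph V) : Prop :=
  ∀ n, 4 ≤ n → ¬HasInducedCycle G n

/-- A graph is weakly chordal if every induced cycle in `G` and in `Gᶜ` has length at most 4. -/
def WeaklyChordal {V : Type} (G : SimpleGraph V) : Prop :=
  (∀ n, 5 ≤ n → ¬HasInducedCycle G n) ∧ ∀ n, 5 ≤ n → ¬HasInducedCycle Gᶜ n

/-- The co-chordal cover number `cochord(G)`: the least `n` such that `n` co-chordal
subgraphs of `G` cover all the edges of `G`. -/
def cochordNumber {V : Type} (G : SimpleGraph V) : ℕ :=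
  sInf { n | ∃ H : Fin n → SimpleGraph V,
    (∀ i, H i ≤ G ∧ Chordal (H i)ᶜ) ∧ ∀ e ∈ G.edgeSet, ∃ i, e ∈ (H i).edgeSet }

/-- A graph is unicyclic if it contains exactly one cycle. -/
def Unicyclic {V : Type} (G : SimpleGraph V) : Prop :=
  ∃ (v : V) (c : G.Walk v v), c.IsCycle ∧
    ∀ (w : V) (c' : G.Walk w w), c'.IsCycle → { e | e ∈ c'.edges } = { e | e ∈ c.edges }

/-- Data exhibiting `G` as the graph `H_T` obtained from the induced subgraph on `Hset`
by attaching, at each vertex of `T ⊆ Hset`, a union of complete graphs having that vertex as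
their only common vertex: a family of cliques `C i` of `G`, each meeting `Hset` exactly in
its attachment vertex `a i ∈ T`, two distinct cliques meeting in at most the common
attachment vertex, together covering all vertices outside `Hset`, and all edges of `G`
lying either inside `Hset` or inside one of the cliques. -/
structure CliqueAttachment {V : Type} (G : SimpleGraph V) (Hset T : Set V) where
  ι : Type
  C : ι → Finset V
  a : ι → V
  a_mem_T : ∀ i, a i ∈ T
  T_sub : T ⊆ Hset
  inter_H : ∀ i, (C i : Set V) ∩ Hset = {a i}
  a_mem_C : ∀ i, a i ∈ C i
  clique : ∀ i, G.IsClique (C i)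
  pairwise_inter : ∀ i j, i ≠ j → (C i : Set V) ∩ (C j : Set V) ⊆ ({a i} : Set V)
  cover : Hset ∪ (⋃ i, (C i : Set V)) = Set.univ
  edges_sub : ∀ u v, G.Adj u v → (u ∈ Hset ∧ v ∈ Hset) ∨ ∃ i, u ∈ C i ∧ v ∈ C i

end EdgeIdealReg

/-! Pick a maximum matching `M`. Every edge of `G` meets an edge of `M` (otherwise `M` could be
enlarged), so the subgraphs `H_m` of edges meeting `m ∈ M` cover `G`. The complement of `H_m`
is a split graph, the two ends of `m` being independent in it and all other vertices forming a
clique; split graphs are chordal, since an induced cycle of length at least four has two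
non-adjacent vertices at distance two outside the independent set. Hence `cochord(G) ≤ mat(G)`.
Conversely, a co-chordal `H ≤ G` contains at most one edge of an induced matching: two of them,
`uv` and `xy`, would span the induced 4-cycle `u x v y` in `Hᶜ`. Hence `ν(G) ≤ cochord(G)`. -/

namespace EdgeIdealReg

variable {V : Type}

theorem chordal_of_isIndepSet_of_isClique_compl {G : SimpleGraph V} {I : Set V}
    (hI : G.IsIndepSet I) (hK : G.IsClique Iᶜ) : Chordal G := by
  rintro n hn ⟨f, hf, hadj⟩
  have hshift : ∀ (i : ZMod n) (k : ℕ), 0 < k → k < n → i + k ≠ i := fun i k hk hkn h =>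
    absurd (Nat.le_of_dvd hk ((ZMod.natCast_eq_zero_iff k n).1 (add_eq_left.1 h))) (by omega)
  have hsucc : ∀ i, f i ∈ I → f (i + 1) ∈ I → False := fun i hi hi' =>
    hI hi hi' (fun h => hshift i 1 one_pos (by omega) (by exact_mod_cast hf h.symm))
      ((hadj _ _).2 (Or.inl rfl))
  have hskip : ∀ i, f i ∉ I → f (i + 2) ∉ I → False := fun i hi hi' => by
    refine ((hadj i (i + 2)).1 (hK hi hi' fun h => hshift i 2 two_pos (by omega) ?_)).elim
      (fun h => hshift (i + 1) 1 one_pos (by omega) ?_)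
      (fun h => hshift i 3 three_pos (by omega) ?_)
    · exact_mod_cast (hf h).symm
    · push_cast; linear_combination h
    · push_cast; linear_combination -h
  have hnotI : ∀ j, f j ∉ I := fun j hj =>
    hskip (j - 1) (fun h => hsucc _ h (by simpa using hj))
      (fun h => hsucc j hj (by rwa [show j - 1 + 2 = j + 1 by ring] at h))
  exact hskip 0 (hnotI 0) (by simpa using hnotI 2)

def incidenceSubgraph (G : SimpleGraph V) (s : Set V) : SimpleGraph V where
  Adj u v := G.Adj u v ∧ (u ∈ s ∨ v ∈ s)
  symm := ⟨fun _ _ h => ⟨h.1.symm, h.2.symm⟩⟩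
  loopless := ⟨fun u h => G.loopless.irrefl u h.1⟩

theorem incidenceSubgraph_adj {G : SimpleGraph V} {s : Set V} {u v : V} :
    (incidenceSubgraph G s).Adj u v ↔ G.Adj u v ∧ (u ∈ s ∨ v ∈ s) :=
  Iff.rfl

theorem incidenceSubgraph_le (G : SimpleGraph V) (s : Set V) : incidenceSubgraph G s ≤ G :=
  fun _ _ h => (incidenceSubgraph_adj.1 h).1

theorem chordal_compl_incidenceSubgraph {G : SimpleGraph V} {s : Set V} (hs : G.IsClique s) :
    Chordal (incidenceSubgraph G s)ᶜ :=
  chordal_of_isIndepSet_of_isClique_compl (I := s)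
    (fun _ hu _ hv huv h => h.2 ⟨hs hu hv huv, Or.inl hu⟩)
    (fun _ hu _ hv huv => ⟨huv, fun h => (incidenceSubgraph_adj.1 h).2.elim hu hv⟩)

theorem hasInducedCycle_compl_four {H : SimpleGraph V} {u v x y : V}
    (huv : H.Adj u v) (hxy : H.Adj x y)
    (hux : ¬H.Adj u x) (huy : ¬H.Adj u y) (hvx : ¬H.Adj v x) (hvy : ¬H.Adj v y)
    (dux : u ≠ x) (duy : u ≠ y) (dvx : v ≠ x) (dvy : v ≠ y) :
    HasInducedCycle Hᶜ 4 := by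
  have hcases : ∀ k : ZMod 4, k = 0 ∨ k = 1 ∨ k = 2 ∨ k = 3 := by decide
  refine ⟨![u, x, v, y], ?_, ?_⟩
  · intro i j hij
    rcases hcases i with rfl | rfl | rfl | rfl <;> rcases hcases j with rfl | rfl | rfl | rfl <;>
      simp_all [eq_comm]
  · intro i j
    rcases hcases i with rfl | rfl | rfl | rfl <;> rcases hcases j with rfl | rfl | rfl | rfl <;>
      simp [huv, hxy, huv.symm, hxy.symm, huv.ne, hxy.ne, huv.ne', hxy.ne', hux, huy, hvx, hvy,
        H.adj_comm x, H.adj_comm y, dux, duy, dvx, dvy, dux.symm, duy.symm, dvx.symm, dvy.symm] <;>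
      decide

theorem IsInducedMatchingSet.eq_of_mem_edgeSet {G H : SimpleGraph V} {N : Finset (Sym2 V)}
    (hN : IsInducedMatchingSet G N) (hHG : H ≤ G) (hH : Chordal Hᶜ) {e f : Sym2 V}
    (he : e ∈ N) (hf : f ∈ N) (heH : e ∈ H.edgeSet) (hfH : f ∈ H.edgeSet) : e = f := by
  by_contra hne
  have hdisj := hN.1.2 he hf hne
  have hind := hN.2 he hf hne
  induction e using Sym2.ind with | _ u v => ?_
  induction f using Sym2.ind with | _ x y => ?_
  have hnadj : ∀ {a b}, a ∈ s(u, v) → b ∈ s(x, y) → ¬H.Adj a b := fun ha hb h =>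
    hind _ _ ha hb (hHG h)
  have hne : ∀ {a b}, a ∈ s(u, v) → b ∈ s(x, y) → a ≠ b := fun ha hb h =>
    hdisj _ ha (h ▸ hb)
  exact hH 4 le_rfl <| hasInducedCycle_compl_four heH hfH
    (hnadj (by simp) (by simp)) (hnadj (by simp) (by simp))
    (hnadj (by simp) (by simp)) (hnadj (by simp) (by simp))
    (hne (by simp) (by simp)) (hne (by simp) (by simp))
    (hne (by simp) (by simp)) (hne (by simp) (by simp))

def IsCochordalCover {ι : Type*} (G : SimpleGraph V) (H : ι → SimpleGraph V) : Prop :=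
  (∀ i, H i ≤ G ∧ Chordal (H i)ᶜ) ∧ ∀ e ∈ G.edgeSet, ∃ i, e ∈ (H i).edgeSet

theorem IsCochordalCover.comp_equiv {ι κ : Type*} {G : SimpleGraph V} {H : ι → SimpleGraph V}
    (hH : IsCochordalCover G H) (σ : κ ≃ ι) : IsCochordalCover G (H ∘ σ) :=
  ⟨fun k => hH.1 (σ k), fun e he => (hH.2 e he).imp' σ.symm fun i hi => by simpa using hi⟩

theorem cochordNumber_le_card {ι : Type*} [Fintype ι] {G : SimpleGraph V}
    {H : ι → SimpleGraph V} (hH : IsCochordalCover G H) : cochordNumber G ≤ Fintype.card ι :=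
  Nat.sInf_le ⟨_, hH.comp_equiv (Fintype.equivFin ι).symm⟩

theorem IsCochordalCover.exists_fin_cochordNumber {ι : Type*} [Fintype ι] {G : SimpleGraph V}
    {H : ι → SimpleGraph V} (hH : IsCochordalCover G H) :
    ∃ H' : Fin (cochordNumber G) → SimpleGraph V, IsCochordalCover G H' :=
  Nat.sInf_mem (s := { n | ∃ H' : Fin n → SimpleGraph V, IsCochordalCover G H' })
    ⟨Fintype.card ι, _, hH.comp_equiv (Fintype.equivFin ι).symm⟩

theorem IsInducedMatchingSet.card_le_of_isCochordalCover {ι : Type*} [Fintype ι]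
    {G : SimpleGraph V} {H : ι → SimpleGraph V} {N : Finset (Sym2 V)}
    (hN : IsInducedMatchingSet G N) (hH : IsCochordalCover G H) : N.card ≤ Fintype.card ι := by
  choose φ hφ using fun e : N => hH.2 e (hN.1.1 e.2)
  have hφinj : Function.Injective φ := fun e f hef => Subtype.ext <|
    hN.eq_of_mem_edgeSet (hH.1 (φ e)).1 (hH.1 (φ e)).2 e.2 f.2 (hφ e) (hef ▸ hφ f)
  simpa using Fintype.card_le_of_injective φ hφinj

theorem inducedMatchingNumber_le_card {ι : Type*} [Fintype ι] {G : SimpleGraph V}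
    {H : ι → SimpleGraph V} (hH : IsCochordalCover G H) :
    inducedMatchingNumber G ≤ Fintype.card ι :=
  csSup_le ⟨0, ∅, ⟨⟨by simp, by simp⟩, by simp⟩, rfl⟩ fun _ ⟨_, hN, hcard⟩ =>
    hcard ▸ hN.card_le_of_isCochordalCover hH

theorem IsMatchingSet.insert {G : SimpleGraph V} {M : Finset (Sym2 V)} {e : Sym2 V}
    [DecidableEq (Sym2 V)] (hM : IsMatchingSet G M) (he : e ∈ G.edgeSet)
    (hdisj : ∀ m ∈ M, ∀ v ∈ e, v ∉ m) : IsMatchingSet G (insert e M) := by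
  refine ⟨by simpa [Set.insert_subset_iff] using ⟨he, hM.1⟩, ?_⟩
  rw [Finset.coe_insert, Set.pairwise_insert]
  exact ⟨hM.2, fun m hm _ => ⟨hdisj m hm, fun v hvm hve => hdisj m hm v hve hvm⟩⟩

theorem bddAbove_matchingSizes [Finite V] (G : SimpleGraph V) :
    BddAbove { n | ∃ M, IsMatchingSet G M ∧ M.card = n } := by
  have := Fintype.ofFinite V
  exact ⟨Fintype.card (Sym2 V), fun _ ⟨M, _, hM⟩ => hM ▸ M.card_le_univ⟩

theorem exists_isMatchingSet_card_eq_matchingNumber [Finite V] (G : SimpleGraph V) :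
    ∃ M, IsMatchingSet G M ∧ M.card = matchingNumber G :=
  Nat.sSup_mem (s := { n | ∃ M, IsMatchingSet G M ∧ M.card = n })
    ⟨0, ∅, ⟨by simp, by simp⟩, rfl⟩ (bddAbove_matchingSizes G)

theorem IsMatchingSet.exists_mem_of_card_eq_matchingNumber [Finite V] {G : SimpleGraph V}
    {M : Finset (Sym2 V)} (hM : IsMatchingSet G M) (hcard : M.card = matchingNumber G)
    {e : Sym2 V} (he : e ∈ G.edgeSet) : ∃ m ∈ M, ∃ v ∈ e, v ∈ m := by
  classical
  by_contra! hdisj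
  have heM : e ∉ M := fun h => hdisj e h _ e.out_fst_mem e.out_fst_mem
  have := le_csSup (bddAbove_matchingSizes G) ⟨_, hM.insert he hdisj, rfl⟩
  rw [Finset.card_insert_of_notMem heM] at this
  change M.card + 1 ≤ matchingNumber G at this
  omega

theorem isClique_coe_of_mem_edgeSet {G : SimpleGraph V} {e : Sym2 V} (he : e ∈ G.edgeSet) :
    G.IsClique (e : Set V) := by
  induction e using Sym2.ind with | _ u v => simpa [SimpleGraph.isClique_pair] using fun _ => he

theorem IsMatchingSet.isCochordalCover_incidenceSubgraph [Finite V] {G : SimpleGraph V}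
    {M : Finset (Sym2 V)} (hM : IsMatchingSet G M) (hcard : M.card = matchingNumber G) :
    IsCochordalCover G fun m : M => incidenceSubgraph G m := by
  refine ⟨fun m => ⟨incidenceSubgraph_le G _,
    chordal_compl_incidenceSubgraph (isClique_coe_of_mem_edgeSet (hM.1 m.2))⟩, fun e he => ?_⟩
  obtain ⟨m, hm, v, hve, hvm⟩ := hM.exists_mem_of_card_eq_matchingNumber hcard he
  induction e using Sym2.ind with | _ a b => ?_
  refine ⟨⟨m, hm⟩, he, ?_⟩
  rcases Sym2.mem_iff.1 hve with rfl | rfl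
  exacts [Or.inl hvm, Or.inr hvm]

end EdgeIdealReg

open EdgeIdealReg in
theorem nu_le_cochord_le_mat_general {V : Type} [Fintype V] (G : SimpleGraph V) :
    inducedMatchingNumber G ≤ cochordNumber G ∧ cochordNumber G ≤ matchingNumber G := by
  obtain ⟨M, hM, hcard⟩ := exists_isMatchingSet_card_eq_matchingNumber G
  have hcover := hM.isCochordalCover_incidenceSubgraph hcard
  obtain ⟨H, hH⟩ := hcover.exists_fin_cochordNumber
  constructor
  · simpa using inducedMatchingNumber_le_card hH
  · simpa [hcard] using cochordNumber_le_card hcover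

open EdgeIdealReg in
/-- For any finite simple graph `G`, `ν(G) ≤ cochord(G) ≤ mat(G)`. -/
theorem nu_le_cochord_le_mat {V : Type} [Fintype V] [DecidableEq V] (G : SimpleGraph V) :
    inducedMatchingNumber G ≤ cochordNumber G ∧ cochordNumber G ≤ matchingNumber G :=
  nu_le_cochord_le_mat_general G
end
end

section
/- Let x_1 be a simplicial vertex of a graph G with closed neighborhood N_G[x_1] = B. Then for all r ≥ 1, (I(G)^{(r)} : x_B) = I(G)^{(r − |B| + 1)}, where x_B is the product of the variables in B and I(G)^{(k)} = S when k ≤ 0. -/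
open MvPolynomial

noncomputable section

/-!
The minimal primes of `I(G)` are the ideals `P_C = (x_v : v ∈ C)` of the minimal vertex covers
`C` of `G`. The power `P_C ^ r` is the monomial ideal of polynomials all of whose monomials have
degree at least `r` in the variables of `C`; comparing lowest-degree components shows that it is
`P_C`-primary. Conversely, for `c ∈ C` a neighbour `u ∉ C` makes `x_u x_c` an edge with
`x_u ∉ P_C`, so `P_C ^ r` lies in the `P_C`-saturation of `I ^ r`. Hence `I^{(r)} = ⋂_C P_C ^ r`.
A minimal cover contains all but exactly one vertex of the clique `B` (one is missing, since the
neighbours of the simplicial vertex lie in `B`), so `x_B` has `C`-degree `|B| - 1` and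
`(P_C ^ r : x_B) = P_C ^ (r - |B| + 1)` for every `C`.
-/

namespace EdgeIdealReg

open Finset Finsupp

section VarsIdeal

variable {σ R : Type*}

def degreeIn (C : Set σ) : (σ →₀ ℕ) →+ ℕ :=
  weight (C.indicator 1)

lemma degreeIn_single_one (C : Set σ) (i : σ) :
    degreeIn C (single i 1) = C.indicator 1 i := by
  rw [degreeIn, weight_single, one_smul]

lemma degreeIn_eq_zero_iff {C : Set σ} {m : σ →₀ ℕ} :
    degreeIn C m = 0 ↔ ∀ i ∈ C, m i = 0 := by
  simp only [degreeIn, weight_apply, Finsupp.sum, sum_eq_zero_iff, Finsupp.mem_support_iff,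
    smul_eq_mul, mul_eq_zero, Set.indicator_apply_eq_zero, Pi.one_apply, one_ne_zero, imp_false]
  grind

variable [CommRing R]

variable (R) in
abbrev varsIdeal (C : Set σ) : Ideal (MvPolynomial σ R) :=
  Ideal.span (X '' C)

lemma monomial_mem_varsIdeal_pow {C : Set σ} {k : ℕ} {m : σ →₀ ℕ} (hm : k ≤ degreeIn C m)
    (c : R) : monomial m c ∈ varsIdeal R C ^ k := by
  induction k generalizing m with
  | zero => simp
  | succ k ih =>
    obtain ⟨i, hiC, hi⟩ : ∃ i ∈ C, m i ≠ 0 := by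
      by_contra! h
      rw [degreeIn_eq_zero_iff.mpr h] at hm
      omega
    obtain ⟨m', rfl⟩ : ∃ m', m = m' + single i 1 :=
      le_iff_exists_add'.mp (single_le_iff.mpr (Nat.one_le_iff_ne_zero.mpr hi))
    rw [map_add, degreeIn_single_one, Set.indicator_of_mem hiC, Pi.one_apply] at hm
    rw [← mul_one c, ← monomial_mul, pow_succ]
    exact Ideal.mul_mem_mul (ih (by omega)) (Ideal.subset_span ⟨i, hiC, rfl⟩)

lemma le_degreeIn_of_mem_varsIdeal_pow {C : Set σ} {k : ℕ} {f : MvPolynomial σ R}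
    (hf : f ∈ varsIdeal R C ^ k) : ∀ m ∈ f.support, k ≤ degreeIn C m := by
  classical
  induction k generalizing f with
  | zero => simp
  | succ k ih =>
    rw [pow_succ] at hf
    refine Submodule.mul_induction_on hf (fun a ha b hb m hm => ?_) (fun a b ha hb m hm => ?_)
    · obtain ⟨i, hi, j, hj, rfl⟩ := mem_add.mp (support_mul a b hm)
      have hj : degreeIn C j ≠ 0 := by
        obtain ⟨v, hvC, hv⟩ := mem_ideal_span_X_image.mp hb j hj
        exact fun h => hv (degreeIn_eq_zero_iff.mp h v hvC)
      have := ih ha i hi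
      rw [map_add]
      omega
    · rcases mem_union.mp (MvPolynomial.support_add hm) with h | h
      exacts [ha m h, hb m h]

lemma mem_varsIdeal_pow_iff {C : Set σ} {k : ℕ} {f : MvPolynomial σ R} :
    f ∈ varsIdeal R C ^ k ↔ ∀ m ∈ f.support, k ≤ degreeIn C m := by
  refine ⟨le_degreeIn_of_mem_varsIdeal_pow, fun h => ?_⟩
  rw [f.as_sum]
  exact Ideal.sum_mem _ fun m hm => monomial_mem_varsIdeal_pow (h m hm) _

lemma X_mem_varsIdeal_iff [Nontrivial R] {C : Set σ} {i : σ} :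
    (X i : MvPolynomial σ R) ∈ varsIdeal R C ↔ i ∈ C := by
  rw [← pow_one (varsIdeal R C), mem_varsIdeal_pow_iff, support_X]
  by_cases hi : i ∈ C <;> simp [degreeIn_single_one, hi]

lemma mul_monomial_mem_varsIdeal_pow_iff {C : Set σ} {r : ℕ} {f : MvPolynomial σ R}
    (e : σ →₀ ℕ) :
    f * monomial e 1 ∈ varsIdeal R C ^ r ↔ f ∈ varsIdeal R C ^ (r - degreeIn C e) := by
  simp only [mem_varsIdeal_pow_iff, MvPolynomial.mem_support_iff]
  constructor
  · intro h m hm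
    have := h (m + e) (by rwa [coeff_mul_monomial, mul_one])
    rw [map_add] at this
    omega
  · intro h m hm
    rw [coeff_mul_monomial'] at hm
    split_ifs at hm with hle
    · have := h (m - e) (by simpa using hm)
      rw [← tsub_add_cancel_of_le hle, map_add]
      omega
    · exact absurd rfl hm

lemma mul_prod_X_mem_varsIdeal_pow_iff {C : Set σ}
    [DecidablePred (· ∈ C)] {B : Finset σ} {r : ℕ} {f : MvPolynomial σ R} :
    f * ∏ v ∈ B, X v ∈ varsIdeal R C ^ r ↔ f ∈ varsIdeal R C ^ (r - #{v ∈ B | v ∈ C}) := by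
  have hprod : ∏ v ∈ B, (X v : MvPolynomial σ R) = monomial (∑ v ∈ B, single v 1) 1 :=
    (monomial_sum_one _ _).symm
  have hdeg : degreeIn C (∑ v ∈ B, single v 1) = #{v ∈ B | v ∈ C} := by
    simp only [map_sum, degreeIn_single_one, Set.indicator_apply, Pi.one_apply, sum_boole,
      Nat.cast_id]
  rw [hprod, mul_monomial_mem_varsIdeal_pow_iff, hdeg]

lemma sub_weightedHomogeneousComponent_mem_varsIdeal_pow {C : Set σ} {n : ℕ}
    {f : MvPolynomial σ R} (hf : f ∈ varsIdeal R C ^ n) :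
    f - weightedHomogeneousComponent (C.indicator 1) n f ∈ varsIdeal R C ^ (n + 1) := by
  rw [mem_varsIdeal_pow_iff] at hf ⊢
  intro m hm
  rw [MvPolynomial.mem_support_iff, coeff_sub, coeff_weightedHomogeneousComponent] at hm
  split_ifs at hm with h
  · exact absurd (sub_self _) hm
  · have := hf m (by simpa using hm)
    exact lt_of_le_of_ne this (Ne.symm h)

lemma eq_zero_of_isWeightedHomogeneous_of_mem_varsIdeal_pow {C : Set σ} {n : ℕ}
    {f : MvPolynomial σ R} (hhom : IsWeightedHomogeneous (C.indicator 1) f n)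
    (hf : f ∈ varsIdeal R C ^ (n + 1)) : f = 0 := by
  by_contra hne
  obtain ⟨m, hm⟩ := support_nonempty.mpr hne
  have := mem_varsIdeal_pow_iff.mp hf m hm
  rw [degreeIn, hhom (MvPolynomial.mem_support_iff.mp hm)] at this
  omega

lemma mem_of_mul_mem_varsIdeal_pow [IsDomain R] {C : Set σ} {k : ℕ} {s f : MvPolynomial σ R}
    (hs : s ∉ varsIdeal R C) (hsf : s * f ∈ varsIdeal R C ^ k) : f ∈ varsIdeal R C ^ k := by
  induction k with
  | zero => simp
  | succ k ih =>
    have hf : f ∈ varsIdeal R C ^ k := ih (Ideal.pow_le_pow_right k.le_succ hsf)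
    set s₀ := weightedHomogeneousComponent (C.indicator 1) 0 s
    set f₀ := weightedHomogeneousComponent (C.indicator 1) k f
    have hs_sub : s - s₀ ∈ varsIdeal R C := by
      simpa using sub_weightedHomogeneousComponent_mem_varsIdeal_pow (n := 0) (f := s) (by simp)
    have hf_sub : f - f₀ ∈ varsIdeal R C ^ (k + 1) :=
      sub_weightedHomogeneousComponent_mem_varsIdeal_pow hf
    have hprod : s₀ * f₀ ∈ varsIdeal R C ^ (k + 1) := by
      rw [show s₀ * f₀ = s * f - (s - s₀) * f - s₀ * (f - f₀) by ring]
      refine sub_mem (sub_mem hsf ?_) (Ideal.mul_mem_left _ _ hf_sub)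
      rw [pow_succ']
      exact Ideal.mul_mem_mul hs_sub hf
    have hhom : IsWeightedHomogeneous (C.indicator 1) (s₀ * f₀) k := by
      simpa using (weightedHomogeneousComponent_isWeightedHomogeneous 0 s).mul
        (weightedHomogeneousComponent_isWeightedHomogeneous k f)
    have hs₀ : s₀ ≠ 0 := fun h => hs (by simpa [h] using hs_sub)
    have hf₀ : f₀ = 0 := (mul_eq_zero.mp
      (eq_zero_of_isWeightedHomogeneous_of_mem_varsIdeal_pow hhom hprod)).resolve_left hs₀
    simpa [hf₀] using hf_sub

lemma varsIdeal_isPrime [IsDomain R] (C : Set σ) : (varsIdeal R C).IsPrime := by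
  refine ⟨fun h => ?_, fun {a b} hab => or_iff_not_imp_left.mpr fun ha => ?_⟩
  · have h1 : (1 : MvPolynomial σ R) ∈ varsIdeal R C ^ 1 := by rw [pow_one, h]; trivial
    have := mem_varsIdeal_pow_iff.mp h1 0 (by simp)
    simp at this
  · simpa using mem_of_mul_mem_varsIdeal_pow ha (k := 1) (by simpa using hab)

end VarsIdeal

lemma exists_mul_mem_pow_of_mem_span_pow {R : Type*} [CommRing R] {p I : Ideal R} [p.IsPrime]
    {S : Set R} (hS : ∀ a ∈ S, ∃ t ∉ p, t * a ∈ I) {k : ℕ} {f : R} (hf : f ∈ Ideal.span S ^ k) :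
    ∃ t ∉ p, t * f ∈ I ^ k := by
  let φ := algebraMap R (Localization.AtPrime p)
  have hsat (J : Ideal R) (a : R) : a ∈ (J.map φ).comap φ ↔ ∃ t ∉ p, t * a ∈ J := by
    rw [Ideal.mem_comap, IsLocalization.algebraMap_mem_map_algebraMap_iff p.primeCompl]
    rfl
  have hspan : Ideal.span S ≤ (I.map φ).comap φ :=
    Ideal.span_le.mpr fun a ha => (hsat I a).mpr (hS a ha)
  have := Ideal.le_comap_pow φ k (Ideal.pow_right_mono hspan k hf)
  rwa [← Ideal.map_pow, hsat] at this

lemma mem_symbolicPower_iff {R : Type} [CommRing R] {I : Ideal R} {r : ℕ} {f : R} :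
    f ∈ symbolicPower I r ↔ ∀ p ∈ I.minimalPrimes, ∃ s ∉ p, s * f ∈ I ^ r :=
  Iff.rfl

lemma symbolicPower_zero {R : Type} [CommRing R] (I : Ideal R) : symbolicPower I 0 = ⊤ :=
  eq_top_iff.mpr fun _ _ p hp => ⟨1, (Ideal.ne_top_iff_one p).mp hp.1.1.ne_top, by simp⟩

lemma symbolicPowerZ_eq_symbolicPower_toNat {R : Type} [CommRing R] (I : Ideal R) (k : ℤ) :
    symbolicPowerZ I k = symbolicPower I k.toNat := by
  rw [symbolicPowerZ]
  split_ifs with h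
  · rw [Int.toNat_of_nonpos h, symbolicPower_zero]
  · rfl

section EdgeIdeal

variable {V K : Type} [Field K] {G : SimpleGraph V}

lemma edgeIdeal_le_varsIdeal {C : Set V} (hC : ∀ u v, G.Adj u v → u ∈ C ∨ v ∈ C) :
    edgeIdeal K G ≤ varsIdeal K C := by
  rw [edgeIdeal, Ideal.span_le]
  rintro _ ⟨u, v, huv, rfl⟩
  rcases hC u v huv with h | h
  · exact Ideal.mul_mem_right _ _ (Ideal.subset_span ⟨u, h, rfl⟩)
  · exact Ideal.mul_mem_left _ _ (Ideal.subset_span ⟨v, h, rfl⟩)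

lemma exists_eq_varsIdeal_of_mem_minimalPrimes {p : Ideal (MvPolynomial V K)}
    (hp : p ∈ (edgeIdeal K G).minimalPrimes) :
    ∃ C : Set V, p = varsIdeal K C ∧ (∀ u v, G.Adj u v → u ∈ C ∨ v ∈ C) ∧
      ∀ c ∈ C, ∃ u ∉ C, G.Adj c u := by
  obtain ⟨⟨hprime, hle⟩, hmin⟩ := hp
  set C := {v | (X v : MvPolynomial V K) ∈ p}
  have hcov : ∀ u v, G.Adj u v → u ∈ C ∨ v ∈ C := fun u v huv =>
    hprime.mem_or_mem (hle (Ideal.subset_span ⟨u, v, huv, rfl⟩))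
  have hCp : varsIdeal K C ≤ p := Ideal.span_le.mpr (by rintro _ ⟨v, hv, rfl⟩; exact hv)
  have hpC : p = varsIdeal K C :=
    le_antisymm (hmin ⟨varsIdeal_isPrime C, edgeIdeal_le_varsIdeal hcov⟩ hCp) hCp
  refine ⟨C, hpC, hcov, fun c hc => ?_⟩
  by_contra! hnbr
  have hcov_of_mem : ∀ u v, G.Adj u v → u ∈ C → u ∈ C \ {c} ∨ v ∈ C \ {c} := by
    intro u v huv hu
    by_cases huc : u = c
    · subst huc
      exact .inr ⟨by_contra fun hv => hnbr v hv huv, (G.ne_of_adj huv).symm⟩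
    · exact .inl ⟨hu, huc⟩
  have hcov' : ∀ u v, G.Adj u v → u ∈ C \ {c} ∨ v ∈ C \ {c} := fun u v huv =>
    (hcov u v huv).elim (hcov_of_mem u v huv) fun hv => (hcov_of_mem v u huv.symm hv).symm
  have hsub : varsIdeal K (C \ {c}) ≤ p :=
    (Ideal.span_mono (Set.image_mono Set.sdiff_subset)).trans hCp
  have := hmin ⟨varsIdeal_isPrime _, edgeIdeal_le_varsIdeal hcov'⟩ hsub hc
  exact (X_mem_varsIdeal_iff.mp this).2 rfl

lemma mem_symbolicPower_edgeIdeal_iff {r : ℕ} {f : MvPolynomial V K} :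
    f ∈ symbolicPower (edgeIdeal K G) r ↔ ∀ p ∈ (edgeIdeal K G).minimalPrimes, f ∈ p ^ r := by
  refine mem_symbolicPower_iff.trans (forall₂_congr fun p hp => ?_)
  obtain ⟨C, rfl, hcov, hnbr⟩ := exists_eq_varsIdeal_of_mem_minimalPrimes hp
  have := varsIdeal_isPrime (R := K) C
  refine ⟨fun ⟨s, hs, hsf⟩ => mem_of_mul_mem_varsIdeal_pow hs
    (Ideal.pow_right_mono (edgeIdeal_le_varsIdeal hcov) r hsf), fun hf => ?_⟩
  refine exists_mul_mem_pow_of_mem_span_pow ?_ hf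
  rintro _ ⟨c, hc, rfl⟩
  obtain ⟨u, hu, hcu⟩ := hnbr c hc
  exact ⟨X u, X_mem_varsIdeal_iff.not.mpr hu, Ideal.subset_span ⟨u, c, hcu.symm, rfl⟩⟩

lemma card_filter_mem_add_one {B : Finset V} (hB : G.IsClique (B : Set V)) {C : Set V}
    [DecidablePred (· ∈ C)] (hC : ∀ u v, G.Adj u v → u ∈ C ∨ v ∈ C) (hout : ∃ u ∈ B, u ∉ C) :
    #{v ∈ B | v ∈ C} + 1 = #B := by
  obtain ⟨u, huB, huC⟩ := hout
  have hunique : {v ∈ B | v ∉ C} = {u} := by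
    refine eq_singleton_iff_unique_mem.mpr ⟨mem_filter.mpr ⟨huB, huC⟩, fun v hv => ?_⟩
    obtain ⟨hvB, hvC⟩ := mem_filter.mp hv
    by_contra hvu
    exact (hC v u (hB hvB huB hvu)).elim hvC huC
  rw [← card_filter_add_card_filter_not (s := B) (· ∈ C), hunique, card_singleton]

end EdgeIdeal

end EdgeIdealReg

open EdgeIdealReg in
theorem symbolic_colon_closed_neighborhood_general {V K : Type} [Field K]
    (G : SimpleGraph V) (x₁ : V) (hsimp : G.IsClique (G.neighborSet x₁))
    (B : Finset V) (hB : (B : Set V) = insert x₁ (G.neighborSet x₁)) (r : ℕ) :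
    Submodule.colon (symbolicPower (edgeIdeal K G) r)
        (Ideal.span {∏ v ∈ B, (X v : MvPolynomial V K)}) =
      symbolicPowerZ (edgeIdeal K G) ((r : ℤ) - B.card + 1) := by
  classical
  have hclique : G.IsClique (B : Set V) :=
    hB ▸ SimpleGraph.isClique_insert.mpr ⟨hsimp, fun _ hb _ => hb⟩
  have hx₁ : x₁ ∈ B := by simp [← Finset.mem_coe, hB]
  ext f
  rw [Ideal.mem_colon_span_singleton, symbolicPowerZ_eq_symbolicPower_toNat,
    mem_symbolicPower_edgeIdeal_iff, mem_symbolicPower_edgeIdeal_iff]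
  refine forall₂_congr fun p hp => ?_
  obtain ⟨C, rfl, hcov, hnbr⟩ := exists_eq_varsIdeal_of_mem_minimalPrimes hp
  have hout : ∃ u ∈ B, u ∉ C := by
    by_cases hx₁C : x₁ ∈ C
    · obtain ⟨u, hu, hadj⟩ := hnbr x₁ hx₁C
      exact ⟨u, by simp [← Finset.mem_coe, hB, hadj], hu⟩
    · exact ⟨x₁, hx₁, hx₁C⟩
  have hcard := card_filter_mem_add_one hclique hcov hout
  rw [mul_prod_X_mem_varsIdeal_pow_iff,
    show r - (B.filter (· ∈ C)).card = ((r : ℤ) - B.card + 1).toNat by omega]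

open EdgeIdealReg in
/-- If `x₁` is a simplicial vertex of `G` with closed neighborhood `B`, then for all `r ≥ 1`,
`(I(G)^{(r)} : x_B) = I(G)^{(r - |B| + 1)}`, with the convention `I^{(k)} = S` for `k ≤ 0`. -/
theorem symbolic_colon_closed_neighborhood {V K : Type} [Field K] [Fintype V] [DecidableEq V]
    (G : SimpleGraph V) (x₁ : V) (hsimp : G.IsClique (G.neighborSet x₁))
    (B : Finset V) (hB : (B : Set V) = insert x₁ (G.neighborSet x₁)) (r : ℕ) (hr : 1 ≤ r) :
    Submodule.colon (symbolicPower (edgeIdeal K G) r)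
        (Ideal.span {∏ v ∈ B, (X v : MvPolynomial V K)}) =
      symbolicPowerZ (edgeIdeal K G) ((r : ℤ) - B.card + 1) :=
  symbolic_colon_closed_neighborhood_general G x₁ hsimp B hB r
end
end

section
/- If H is a weakly chordal graph and T ⊆ V(H), then the graph H_T obtained by attaching unions of complete graphs at the vertices of T is again weakly chordal. -/
open MvPolynomial

noncomputable section

open EdgeIdealReg in
/-- If `H` is weakly chordal and `G = H_T` is obtained by attaching unions of complete graphs
at the vertices of `T ⊆ V(H)`, then `G` is weakly chordal. -/
theorem weaklyChordal_attached {V : Type} (G : SimpleGraph V) (Hset T : Set V)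
    (hH : WeaklyChordal (G.induce Hset)) (hatt : Nonempty (CliqueAttachment G Hset T)) :
    WeaklyChordal G := by
  obtain ⟨att⟩ := hatt
  have memC : ∀ u : V, u ∉ Hset → ∃ i, u ∈ att.C i := by
    intro u hu
    have h : u ∈ Hset ∪ ⋃ i, ((att.C i : Finset V) : Set V) := by rw [att.cover]; trivial
    rcases h with h | h
    · exact absurd h hu
    · simpa using h
  have key : ∀ (i : att.ι) (u v : V), G.Adj u v → u ∉ Hset → u ∈ att.C i → v ∈ att.C i := by
    intro i u v huv hu hui
    rcases att.edges_sub u v huv with ⟨h1, _⟩ | ⟨j, hj1, hj2⟩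
    · exact absurd h1 hu
    · by_cases hij : j = i
      · exact hij ▸ hj2
      · have h2 : u ∈ ({att.a j} : Set V) := att.pairwise_inter j i hij ⟨hj1, hui⟩
        have h3 : u = att.a j := h2
        rw [h3] at hu
        exact (hu (att.T_sub (att.a_mem_T j))).elim
  constructor
  · intro n hn hcy
    obtain ⟨f, hinj, hadj⟩ := hcy
    have hne : ∀ c : ℕ, 0 < c → c < n → ((c : ℕ) : ZMod n) ≠ 0 := by
      intro c hc hcn h
      have hd : n ∣ c := (ZMod.natCast_eq_zero_iff c n).mp h
      have := Nat.le_of_dvd hc hd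
      omega
    have hin : ∀ m : ZMod n, f m ∈ Hset := by
      intro m
      by_contra hm
      obtain ⟨i, hi⟩ := memC _ hm
      have h1 : G.Adj (f m) (f (m + 1)) := (hadj m (m + 1)).mpr (Or.inl rfl)
      have h2 : G.Adj (f m) (f (m - 1)) := (hadj m (m - 1)).mpr (Or.inr (by ring))
      have c1 := key i _ _ h1 hm hi
      have c2 := key i _ _ h2 hm hi
      have hne12 : f (m + 1) ≠ f (m - 1) := by
        intro h
        have h' := hinj h
        exact hne 2 (by norm_num) (by omega) (by push_cast; linear_combination h')
      have hadj' : G.Adj (f (m + 1)) (f (m - 1)) :=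
        att.clique i (Finset.mem_coe.mpr c1) (Finset.mem_coe.mpr c2) hne12
      rcases (hadj _ _).mp hadj' with h | h
      · exact hne 3 (by norm_num) (by omega) (by push_cast; linear_combination -h)
      · exact hne 1 (by norm_num) (by omega) (by push_cast; linear_combination h)
    refine hH.1 n hn ⟨fun m => ⟨f m, hin m⟩, ?_, ?_⟩
    · intro a b h
      exact hinj (congrArg Subtype.val h)
    · intro i j
      simpa using hadj i j
  · intro n hn hcy
    obtain ⟨f, hinj, hadj⟩ := hcy
    have hne : ∀ c : ℕ, 0 < c → c < n → ((c : ℕ) : ZMod n) ≠ 0 := by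
      intro c hc hcn h
      have hd : n ∣ c := (ZMod.natCast_eq_zero_iff c n).mp h
      have := Nat.le_of_dvd hc hd
      omega
    have hin : ∀ m : ZMod n, f m ∈ Hset := by
      intro m
      by_contra hm
      obtain ⟨i, hi⟩ := memC _ hm
      have e2 : G.Adj (f m) (f (m + 2)) := by
        by_contra hG
        have hc : Gᶜ.Adj (f m) (f (m + 2)) := by
          rw [SimpleGraph.compl_adj]
          exact ⟨fun h => hne 2 (by norm_num) (by omega)
            (by push_cast; linear_combination -(hinj h)), hG⟩
        rcases (hadj m (m + 2)).mp hc with h | h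
        · exact hne 1 (by norm_num) (by omega) (by push_cast; linear_combination h)
        · exact hne 3 (by norm_num) (by omega) (by push_cast; linear_combination -h)
      have e3 : G.Adj (f m) (f (m + 3)) := by
        by_contra hG
        have hc : Gᶜ.Adj (f m) (f (m + 3)) := by
          rw [SimpleGraph.compl_adj]
          exact ⟨fun h => hne 3 (by norm_num) (by omega)
            (by push_cast; linear_combination -(hinj h)), hG⟩
        rcases (hadj m (m + 3)).mp hc with h | h
        · exact hne 2 (by norm_num) (by omega) (by push_cast; linear_combination h)
        · exact hne 4 (by norm_num) (by omega) (by push_cast; linear_combination -h)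
      have c2 := key i _ _ e2 hm hi
      have c3 := key i _ _ e3 hm hi
      have hne23 : f (m + 2) ≠ f (m + 3) := by
        intro h
        exact hne 1 (by norm_num) (by omega) (by push_cast; linear_combination -(hinj h))
      have hadjG : G.Adj (f (m + 2)) (f (m + 3)) :=
        att.clique i (Finset.mem_coe.mpr c2) (Finset.mem_coe.mpr c3) hne23
      have hcadj : Gᶜ.Adj (f (m + 2)) (f (m + 3)) :=
        (hadj (m + 2) (m + 3)).mpr (Or.inl (by ring))
      exact ((SimpleGraph.compl_adj G _ _).mp hcadj).2 hadjG
    refine hH.2 n hn ⟨fun m => ⟨f m, hin m⟩, ?_, ?_⟩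
    · intro a b h
      exact hinj (congrArg Subtype.val h)
    · intro i j
      rw [← hadj i j]
      simp [SimpleGraph.compl_adj, Subtype.ext_iff, not_and]
end
end
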